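/- There is an absolute constant K > 0 (allowed to depend on p) such that the following holds. Let G, H be finite-dimensional F_p-vector spaces, V ≤ G a subspace, t ∈ G, and β : G × G → F_p^r a bilinear map such that for every nonzero λ ∈ F_p^r the bilinear form (u,v) ↦ λ·β(u,v) restricted to V × V has rank at least R. Let X ⊆ t + V; for x ∈ X put U_x = {y ∈ V : β(x,y) = 0} and let φ_x : U_x → H be a linear map. Say a quadruple (x_1,x_2,x_3,x_4) of elements of X with x_1 − x_2 = x_3 − x_4 is respected if φ_{x_1}(y) − φ_{x_2}(y) − φ_{x_3}(y) + φ_{x_4}(y) = 0 for all y ∈ U_{x_1} ∩ U_{x_2} ∩ U_{x_3} ∩ U_{x_4}. Suppose x, x+a, y, y+a ∈ X are points for which there are at least c'|V|^k tuples (z_1,...,z_k) ∈ (X ∩ (t+V))^k with z_1+a,...,z_k+a ∈ X such that the quadruples (x+a, x, z_1+a, z_1), (z_i+a, z_i, z_{i+1}+a, z_{i+1}) for 1 ≤ i ≤ k−1, and (y+a, y, z_k+a, z_k) are all respected. If R ≥ K·(kr + log(10(c')^{−1}) + 1), then the quadruple (x+a, x, y+a, y) is also respected. -/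

import Mathlib

/-!
Suppose the quadruple `(x + a, x, y + a, y)` is not respected. On
`W = U_{x+a} ∩ U_x ∩ U_{y+a} ∩ U_y`, a subspace of `V` of codimension at most `4r`, the defect
`φ_{x+a} - φ_x - φ_{y+a} + φ_y` is then nonzero, so some linear functional `ξ` of it is nonzero.
Since `β(a, ·)` vanishes on `W`, telescoping along a respected chain `z` shows that `ξ` vanishes on
`W ∩ ⋂ᵢ ker β(zᵢ, ·)`, hence `ξ = ∑ᵢ λᵢ · β(zᵢ, ·)|_W` for some nonzero `λ ∈ (F_p^r)^k`.
For a fixed `λ` with `λ_{i₀} ≠ 0` these chains form a fibre of an affine map on `(t + V)^k` whose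
image contains that of `v ↦ λ_{i₀} · β(v, ·)|_W`, a map of rank at least `R - 4r`, so there are
at most `|V|^k p^{4r - R}` of them. Summing over the `p^{kr}` choices of `λ` gives
`c' ≤ p^{kr + 4r - R}`, which is incompatible with `R ≥ 5 (kr + log (10 / c') + 1)`.
-/

/-- `HasBilinRankDecomp b m` says that the bilinear form `b` can be written as a sum of `m`
products of pairs of linear forms.  The rank of `b` is the least such `m`. -/
def HasBilinRankDecomp {k V : Type*} [CommSemiring k] [AddCommMonoid V] [Module k V]
    (b : V → V → k) (m : ℕ) : Prop :=
  ∃ α α' : Fin m → (V →ₗ[k] k), ∀ x y, b x y = ∑ i, α i x * α' i y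

/-- A quadruple `(x₁,x₂,x₃,x₄)` is subspace-respected by the system of partially defined
linear maps `φ_x : U_x → H` if `φ_{x₁} - φ_{x₂} - φ_{x₃} + φ_{x₄}` vanishes on
`U_{x₁} ∩ U_{x₂} ∩ U_{x₃} ∩ U_{x₄}`. -/
def SubspaceRespected {p : ℕ} {G H : Type*} [AddCommGroup G] [Module (ZMod p) G]
    [AddCommGroup H] [Module (ZMod p) H] (U : G → Submodule (ZMod p) G)
    (φ : (x : G) → (↥(U x) →ₗ[ZMod p] H)) (x₁ x₂ x₃ x₄ : G) : Prop :=
  ∀ (y : G) (h₁ : y ∈ U x₁) (h₂ : y ∈ U x₂) (h₃ : y ∈ U x₃) (h₄ : y ∈ U x₄),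
    φ x₁ ⟨y, h₁⟩ - φ x₂ ⟨y, h₂⟩ - φ x₃ ⟨y, h₃⟩ + φ x₄ ⟨y, h₄⟩ = 0

open Module LinearMap Matrix

section LinearAlgebra

variable {K M N : Type*} [Field K] [AddCommGroup M] [Module K M] [AddCommGroup N] [Module K N]

theorem Submodule.finrank_map_add_finrank_inf_ker (f : M →ₗ[K] N) (P : Submodule K M)
    [FiniteDimensional K P] : finrank K (P.map f) + finrank K ↥(P ⊓ ker f) = finrank K P := by
  have h := (f.domRestrict P).finrank_range_add_finrank_ker
  rwa [range_domRestrict, ker_domRestrict, ← Submodule.finrank_map_subtype_eq,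
    Submodule.map_comap_subtype] at h

theorem Submodule.finrank_le_finrank_inf_ker_add [FiniteDimensional K N] (P : Submodule K M)
    [FiniteDimensional K P] (f : M →ₗ[K] N) :
    finrank K P ≤ finrank K ↥(P ⊓ ker f) + finrank K N := by
  have := P.finrank_map_add_finrank_inf_ker f
  have := (P.map f).finrank_le
  omega

theorem Submodule.finrank_map_le_finrank_map_comp_add (P : Submodule K M) [FiniteDimensional K P]
    (f : M →ₗ[K] N) {Q : Type*} [AddCommGroup Q] [Module K Q] (g : N →ₗ[K] Q)
    [FiniteDimensional K (ker g)] :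
    finrank K (P.map f) ≤ finrank K (P.map (g ∘ₗ f)) + finrank K (ker g) := by
  have := (P.map f).finrank_map_add_finrank_inf_ker g
  rw [Submodule.map_comp]
  have := Submodule.finrank_mono (inf_le_right : P.map f ⊓ ker g ≤ ker g)
  omega

theorem hasBilinRankDecomp_finrank_range [FiniteDimensional K M] (B : M →ₗ[K] M →ₗ[K] K) :
    HasBilinRankDecomp (fun u v => B u v) (finrank K (range B)) := by
  have := Module.Free.of_divisionRing K (range B)
  let b := Module.finBasis K (range B)
  refine ⟨fun i => b.coord i ∘ₗ B.rangeRestrict, fun i => b i, fun u v => ?_⟩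
  calc B u v = (B.rangeRestrict u : M →ₗ[K] K) v := rfl
    _ = ((∑ i, b.repr (B.rangeRestrict u) i • b i : range B) : M →ₗ[K] K) v := by
      rw [b.sum_repr]
    _ = _ := by
      rw [Submodule.coe_sum, LinearMap.sum_apply]
      simp only [Submodule.coe_smul, LinearMap.smul_apply, smul_eq_mul]
      rfl

theorem Submodule.finrank_map_compl₂_add_le (b : M →ₗ[K] M →ₗ[K] K) {V W : Submodule K M}
    [FiniteDimensional K V] (hWV : W ≤ V) :
    finrank K (V.map (b.compl₂ V.subtype)) + finrank K W ≤
      finrank K (V.map (b.compl₂ W.subtype)) + finrank K V := by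
  let ρ := (Submodule.inclusion hWV).dualMap
  have hker : finrank K (ker ρ) + finrank K W = finrank K V := by
    have := ρ.finrank_range_add_finrank_ker
    rwa [range_eq_top.mpr (dualMap_surjective_of_injective (Submodule.inclusion_injective hWV)),
      finrank_top, Subspace.dual_finrank_eq, Subspace.dual_finrank_eq, add_comm] at this
  calc _ ≤ finrank K (V.map (ρ ∘ₗ b.compl₂ V.subtype)) + finrank K (ker ρ) + finrank K W :=
        Nat.add_le_add_right (V.finrank_map_le_finrank_map_comp_add _ ρ) _
    _ = _ := by rw [add_assoc, hker]; rfl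

theorem exists_eq_sum_dotProduct_comp_of_iInf_ker_le {ι κ : Type*} [Fintype ι] [Fintype κ]
    (f : ι → M →ₗ[K] κ → K) {ξ : Dual K M} (h : ⨅ i, ker (f i) ≤ ker ξ) :
    ∃ c : ι → κ → K, ξ = ∑ i, dotProductBilin K K (c i) ∘ₗ f i := by
  have h' : ⨅ ij : ι × κ, ker (proj ij.2 ∘ₗ f ij.1) ≤ ker ξ := by
    refine le_trans (fun w hw => ?_) h
    simp only [Submodule.mem_iInf, mem_ker, Prod.forall] at hw ⊢
    exact fun i => funext (hw i)
  obtain ⟨c, hc⟩ := (Submodule.mem_span_range_iff_exists_fun K).1 (mem_span_of_iInf_ker_le_ker h')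
  refine ⟨fun i j => c (i, j), ?_⟩
  ext w
  simp [← hc, dotProduct, Fintype.sum_prod_type]

end LinearAlgebra

section Counting

variable {K A : Type*} [Field K] [AddCommGroup A] [Module K A]

theorem Submodule.natCard_pi_univ_const {ι : Type*} [Fintype ι] (V : Submodule K A) :
    Nat.card ↥(Submodule.pi Set.univ fun _ : ι => V) = Nat.card V ^ Fintype.card ι := by
  change Nat.card (Set.univ.pi fun _ : ι => (V : Set A)) = _
  rw [Nat.card_congr (Equiv.Set.univPi fun _ : ι => (V : Set A)), Nat.card_pi,
    Finset.prod_const, Finset.card_univ]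
  rfl

variable [Finite A]

theorem Submodule.ncard_le_natCard_of_forall_sub_mem (P : Submodule K A) {s : Set A} {a : A}
    (h : ∀ z ∈ s, z - a ∈ P) : s.ncard ≤ Nat.card P := by
  rw [← SetLike.coe_sort_coe, Nat.card_coe_set_eq]
  exact Set.ncard_le_ncard_of_injOn (· - a) h fun _ _ _ _ e => sub_left_injective e

theorem Submodule.natCard_inf_ker_mul_pow_finrank_map {M : Type*} [AddCommGroup M] [Module K M]
    (P : Submodule K A) (f : A →ₗ[K] M) :
    Nat.card ↥(P ⊓ ker f) * Nat.card K ^ finrank K (P.map f) = Nat.card P := by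
  rw [natCard_eq_pow_finrank (K := K), natCard_eq_pow_finrank (K := K) (V := P), ← pow_add,
    add_comm, P.finrank_map_add_finrank_inf_ker f]

theorem Submodule.ncard_fiber_mul_pow_finrank_map_le {M : Type*} [AddCommGroup M] [Module K M]
    (P : Submodule K A) (f : A →ₗ[K] M) (a : A) (ξ : M) :
    {z | z - a ∈ P ∧ f z = ξ}.ncard * Nat.card K ^ finrank K (P.map f) ≤ Nat.card P := by
  rcases Set.eq_empty_or_nonempty {z | z - a ∈ P ∧ f z = ξ} with hs | ⟨z₁, hz₁a, hz₁ξ⟩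
  · simp [hs]
  rw [← P.natCard_inf_ker_mul_pow_finrank_map f]
  gcongr
  refine (P ⊓ ker f).ncard_le_natCard_of_forall_sub_mem (a := z₁) fun z ⟨hza, hzξ⟩ => ⟨?_, ?_⟩
  · simpa using P.sub_mem hza hz₁a
  · simp [hzξ, hz₁ξ]

theorem Submodule.ncard_le_natCard_pow_of_forall_sub_mem {ι : Type*} [Fintype ι]
    (V : Submodule K A) {s : Set (ι → A)} {t : A} (h : ∀ z ∈ s, ∀ i, z i - t ∈ V) :
    s.ncard ≤ Nat.card V ^ Fintype.card ι := by
  rw [← V.natCard_pi_univ_const]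
  exact Submodule.ncard_le_natCard_of_forall_sub_mem _ (a := fun _ => t)
    fun z hz i _ => h z hz i

theorem Submodule.ncard_sum_eq_mul_pow_finrank_map_le [Finite K] {ι M : Type*} [Fintype ι]
    [AddCommGroup M] [Module K M] (L : ι → A →ₗ[K] M) (V : Submodule K A) (t : A) (ξ : M) (i₀ : ι) :
    {z : ι → A | (∀ i, z i - t ∈ V) ∧ ∑ i, L i (z i) = ξ}.ncard *
      Nat.card K ^ finrank K (V.map (L i₀)) ≤ Nat.card V ^ Fintype.card ι := by
  classical
  let P : Submodule K (ι → A) := Submodule.pi Set.univ fun _ => V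
  let Φ : (ι → A) →ₗ[K] M := ∑ i, L i ∘ₗ proj i
  have hmap : V.map (L i₀) ≤ P.map Φ := by
    rintro _ ⟨v, hv, rfl⟩
    refine ⟨Pi.single i₀ v, fun i _ => ?_, by simp [Φ, Pi.single_apply, apply_ite]⟩
    rcases eq_or_ne i i₀ with rfl | h
    · simpa using hv
    · simp [h]
  have hset : {z : ι → A | (∀ i, z i - t ∈ V) ∧ ∑ i, L i (z i) = ξ} =
      {z | z - (fun _ => t) ∈ P ∧ Φ z = ξ} := by
    ext z
    simp [P, Φ, Submodule.mem_pi]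
  calc _ ≤ {z | z - (fun _ => t) ∈ P ∧ Φ z = ξ}.ncard * Nat.card K ^ finrank K (P.map Φ) := by
        rw [hset]
        gcongr
        · exact Nat.card_pos
        · exact Submodule.finrank_mono hmap
    _ ≤ Nat.card P := P.ncard_fiber_mul_pow_finrank_map_le Φ _ ξ
    _ = _ := V.natCard_pi_univ_const

end Counting

section Respected

variable {p : ℕ} {G H : Type*} [AddCommGroup G] [Module (ZMod p) G] [AddCommGroup H]
  [Module (ZMod p) H] (U : G → Submodule (ZMod p) G) (φ : (x : G) → (↥(U x) →ₗ[ZMod p] H))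

def quadDefect (x₁ x₂ x₃ x₄ : G) : ↥(U x₁ ⊓ U x₂ ⊓ U x₃ ⊓ U x₄) →ₗ[ZMod p] H :=
  φ x₁ ∘ₗ Submodule.inclusion (inf_le_left.trans (inf_le_left.trans inf_le_left)) -
    φ x₂ ∘ₗ Submodule.inclusion (inf_le_left.trans (inf_le_left.trans inf_le_right)) -
    φ x₃ ∘ₗ Submodule.inclusion (inf_le_left.trans inf_le_right) +
    φ x₄ ∘ₗ Submodule.inclusion inf_le_right

theorem subspaceRespected_iff_quadDefect_eq_zero (x₁ x₂ x₃ x₄ : G) :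
    SubspaceRespected U φ x₁ x₂ x₃ x₄ ↔ quadDefect U φ x₁ x₂ x₃ x₄ = 0 :=
  ⟨fun h => LinearMap.ext fun w => h w w.2.1.1.1 w.2.1.1.2 w.2.1.2 w.2.2,
    fun h y h₁ h₂ h₃ h₄ => LinearMap.congr_fun h ⟨y, ⟨⟨h₁, h₂⟩, h₃⟩, h₄⟩⟩

theorem quadDefect_apply_eq_zero_of_chain {x y a : G} {k : ℕ} (hk : 0 < k) {z : Fin k → G}
    (hfirst : SubspaceRespected U φ (x + a) x (z ⟨0, hk⟩ + a) (z ⟨0, hk⟩))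
    (hmid : ∀ (i : ℕ) (h₁ : i < k) (h₂ : i + 1 < k), SubspaceRespected U φ
      (z ⟨i, h₁⟩ + a) (z ⟨i, h₁⟩) (z ⟨i + 1, h₂⟩ + a) (z ⟨i + 1, h₂⟩))
    (hlast : SubspaceRespected U φ (y + a) y (z ⟨k - 1, Nat.sub_lt hk Nat.one_pos⟩ + a)
      (z ⟨k - 1, Nat.sub_lt hk Nat.one_pos⟩))
    (w : ↥(U (x + a) ⊓ U x ⊓ U (y + a) ⊓ U y)) (hw : ∀ i, (w : G) ∈ U (z i + a) ⊓ U (z i)) :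
    quadDefect U φ (x + a) x (y + a) y w = 0 := by
  let d : Fin k → H := fun i => φ (z i + a) ⟨w, (hw i).1⟩ - φ (z i) ⟨w, (hw i).2⟩
  have hd : ∀ i (h : i < k), d ⟨i, h⟩ = d ⟨0, hk⟩ := by
    intro i
    induction i with
    | zero => exact fun _ => rfl
    | succ i ih =>
      intro h
      rw [← ih (by omega), eq_comm, ← sub_eq_zero,
        ← hmid i (by omega) h w (hw _).1 (hw _).2 (hw _).1 (hw _).2]
      simp only [d]
      abel
  have hx : φ (x + a) ⟨w, w.2.1.1.1⟩ - φ x ⟨w, w.2.1.1.2⟩ = d ⟨0, hk⟩ := by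
    rw [← sub_eq_zero, ← hfirst w w.2.1.1.1 w.2.1.1.2 (hw _).1 (hw _).2]
    simp only [d]
    abel
  have hy : φ (y + a) ⟨w, w.2.1.2⟩ - φ y ⟨w, w.2.2⟩ = d ⟨0, hk⟩ := by
    rw [← hd (k - 1) (by omega), ← sub_eq_zero, ← hlast w w.2.1.2 w.2.2 (hw _).1 (hw _).2]
    simp only [d]
    abel
  calc quadDefect U φ (x + a) x (y + a) y w
      = (φ (x + a) ⟨w, w.2.1.1.1⟩ - φ x ⟨w, w.2.1.1.2⟩) -
          (φ (y + a) ⟨w, w.2.1.2⟩ - φ y ⟨w, w.2.2⟩) := by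
        simp only [quadDefect, LinearMap.add_apply, LinearMap.sub_apply, LinearMap.comp_apply,
          Submodule.inclusion_apply]
        abel
    _ = 0 := by rw [hx, hy, sub_self]

end Respected

section Forms

variable {K G N : Type*} [Field K] [AddCommGroup G] [Module K G] [AddCommGroup N] [Module K N]

theorem Submodule.finrank_le_finrank_inf_ker_four_add [FiniteDimensional K N]
    (β : G →ₗ[K] G →ₗ[K] N) (V : Submodule K G) [FiniteDimensional K V] (x₁ x₂ x₃ x₄ : G) :
    finrank K V ≤ finrank K ↥(V ⊓ ker (β x₁) ⊓ (V ⊓ ker (β x₂)) ⊓ (V ⊓ ker (β x₃)) ⊓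
      (V ⊓ ker (β x₄))) + 4 * finrank K N := by
  let f : G →ₗ[K] Fin 4 → N := LinearMap.pi ![β x₁, β x₂, β x₃, β x₄]
  have hle : V ⊓ ker f ≤ V ⊓ ker (β x₁) ⊓ (V ⊓ ker (β x₂)) ⊓ (V ⊓ ker (β x₃)) ⊓
      (V ⊓ ker (β x₄)) := by
    rintro w ⟨hV, hf⟩
    have h : ∀ i, ![β x₁, β x₂, β x₃, β x₄] i w = 0 := fun i => congrFun hf i
    exact ⟨⟨⟨⟨hV, h 0⟩, ⟨hV, h 1⟩⟩, ⟨hV, h 2⟩⟩, ⟨hV, h 3⟩⟩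
  calc finrank K V ≤ finrank K ↥(V ⊓ ker f) + finrank K (Fin 4 → N) :=
        V.finrank_le_finrank_inf_ker_add f
    _ ≤ _ := by
      rw [Module.finrank_pi_fintype]
      simp only [Finset.sum_const, Finset.card_univ, Fintype.card_fin, smul_eq_mul]
      gcongr
      exact Submodule.finrank_mono hle

def scalarFormOn {κ : Type*} [Fintype κ] (β : G →ₗ[K] G →ₗ[K] κ → K) (μ : κ → K)
    (W : Submodule K G) : G →ₗ[K] Dual K W :=
  (β.compr₂ (dotProductBilin K K μ)).compl₂ W.subtype

theorem le_finrank_map_scalarFormOn_add {κ : Type*} [Fintype κ] (β : G →ₗ[K] G →ₗ[K] κ → K)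
    (μ : κ → K) {V W : Submodule K G} [FiniteDimensional K V] (hWV : W ≤ V) {s : ℕ}
    (hs : finrank K V ≤ finrank K W + s) {R : ℝ}
    (hR : ∀ m : ℕ, HasBilinRankDecomp (fun u v : V => ∑ i, μ i * β u v i) m → R ≤ m) :
    R ≤ (finrank K (V.map (scalarFormOn β μ W)) + s : ℕ) := by
  let b := β.compr₂ (dotProductBilin K K μ)
  have hV : R ≤ finrank K (V.map (b.compl₂ V.subtype)) := by
    have := hasBilinRankDecomp_finrank_range (b.compl₂ V.subtype ∘ₗ V.subtype)
    rw [range_comp, Submodule.range_subtype] at this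
    exact hR _ this
  have := Submodule.finrank_map_compl₂_add_le b hWV
  refine hV.trans (Nat.cast_le.mpr ?_)
  change _ ≤ finrank K (V.map (b.compl₂ W.subtype)) + s
  omega

end Forms

theorem iInf_ker_le_ker_quadDefect {p : ℕ} {G H N : Type*} [AddCommGroup G] [Module (ZMod p) G]
    [AddCommGroup H] [Module (ZMod p) H] [AddCommGroup N] [Module (ZMod p) N]
    (β : G →ₗ[ZMod p] G →ₗ[ZMod p] N) (V : Submodule (ZMod p) G)
    (φ : (x : G) → ↥(V ⊓ ker (β x)) →ₗ[ZMod p] H) {x y a : G} {k : ℕ} (hk : 0 < k)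
    {z : Fin k → G}
    (hfirst : SubspaceRespected (fun w => V ⊓ ker (β w)) φ (x + a) x (z ⟨0, hk⟩ + a) (z ⟨0, hk⟩))
    (hmid : ∀ (i : ℕ) (h₁ : i < k) (h₂ : i + 1 < k), SubspaceRespected (fun w => V ⊓ ker (β w)) φ
      (z ⟨i, h₁⟩ + a) (z ⟨i, h₁⟩) (z ⟨i + 1, h₂⟩ + a) (z ⟨i + 1, h₂⟩))
    (hlast : SubspaceRespected (fun w => V ⊓ ker (β w)) φ (y + a) y
      (z ⟨k - 1, Nat.sub_lt hk Nat.one_pos⟩ + a) (z ⟨k - 1, Nat.sub_lt hk Nat.one_pos⟩)) :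
    ⨅ i, ker (β (z i) ∘ₗ Submodule.subtype _) ≤
      ker (quadDefect (fun w => V ⊓ ker (β w)) φ (x + a) x (y + a) y) := by
  rintro ⟨w, hw⟩ hwz
  have hz : ∀ i, β (z i) w = 0 := fun i => (Submodule.mem_iInf _).mp hwz i
  have hxa : β (x + a) w = 0 := hw.1.1.1.2
  have hβa : β a w = 0 := by rwa [map_add, LinearMap.add_apply, hw.1.1.2.2, zero_add] at hxa
  refine quadDefect_apply_eq_zero_of_chain _ φ hk hfirst hmid hlast ⟨w, hw⟩ fun i =>
    ⟨⟨hw.2.1, ?_⟩, ⟨hw.2.1, hz i⟩⟩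
  show β (z i + a) w = 0
  rw [map_add, LinearMap.add_apply, hz i, hβa, add_zero]

section Chains

variable {K G κ ι : Type*} [Field K] [Fintype K] [AddCommGroup G] [Module K G] [Finite G]
  [Fintype κ] [Fintype ι] (β : G →ₗ[K] G →ₗ[K] κ → K) (V W : Submodule K G) (t : G)

theorem ncard_sum_scalarFormOn_eq_mul_pow_le {D s : ℕ}
    (hD : ∀ μ : κ → K, μ ≠ 0 → D ≤ finrank K (V.map (scalarFormOn β μ W)) + s)
    {c : ι → κ → K} (hc : c ≠ 0) (ξ : Dual K W) :
    {z : ι → G | (∀ i, z i - t ∈ V) ∧ ∑ i, scalarFormOn β (c i) W (z i) = ξ}.ncard *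
      Nat.card K ^ D ≤ Nat.card K ^ s * Nat.card V ^ Fintype.card ι := by
  obtain ⟨i₀, hi₀⟩ := Function.ne_iff.mp hc
  calc _ ≤ _ * Nat.card K ^ finrank K (V.map (scalarFormOn β (c i₀) W)) * Nat.card K ^ s := by
        rw [mul_assoc, ← pow_add]
        gcongr
        · exact Nat.card_pos
        · exact hD _ hi₀
    _ ≤ Nat.card V ^ Fintype.card ι * Nat.card K ^ s := by
        gcongr
        exact V.ncard_sum_eq_mul_pow_finrank_map_le _ t ξ i₀
    _ = _ := mul_comm _ _

theorem ncard_setOf_iInf_ker_le_mul_pow_le {ξ : Dual K W} (hξ : ξ ≠ 0) {D s : ℕ}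
    (hD : ∀ μ : κ → K, μ ≠ 0 → D ≤ finrank K (V.map (scalarFormOn β μ W)) + s) :
    {z : ι → G | (∀ i, z i - t ∈ V) ∧ ⨅ i, ker (β (z i) ∘ₗ W.subtype) ≤ ker ξ}.ncard *
        Nat.card K ^ D ≤
      Nat.card K ^ (Fintype.card ι * Fintype.card κ + s) * Nat.card V ^ Fintype.card ι := by
  classical
  let T : (ι → κ → K) → Set (ι → G) := fun c =>
    {z | (∀ i, z i - t ∈ V) ∧ ∑ i, scalarFormOn β (c i) W (z i) = ξ}
  let C := Finset.univ.filter fun c : ι → κ → K => c ≠ 0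
  have hsub : {z : ι → G | (∀ i, z i - t ∈ V) ∧ ⨅ i, ker (β (z i) ∘ₗ W.subtype) ≤ ker ξ} ⊆
      ⋃ c ∈ C, T c := by
    rintro z ⟨hzV, hz⟩
    obtain ⟨c, rfl⟩ := exists_eq_sum_dotProduct_comp_of_iInf_ker_le _ hz
    refine Set.mem_biUnion (Finset.mem_filter.mpr ⟨Finset.mem_univ c, ?_⟩) ⟨hzV, ?_⟩
    · rintro rfl
      exact hξ (by ext; simp)
    · ext
      rfl
  calc _ ≤ (∑ c ∈ C, (T c).ncard) * Nat.card K ^ D := by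
        gcongr
        exact (Set.ncard_le_ncard hsub).trans (C.set_ncard_biUnion_le T)
    _ ≤ ∑ _c ∈ C, Nat.card K ^ s * Nat.card V ^ Fintype.card ι := by
        rw [Finset.sum_mul]
        exact Finset.sum_le_sum fun c hc =>
          ncard_sum_scalarFormOn_eq_mul_pow_le β V W t hD (Finset.mem_filter.mp hc).2 ξ
    _ ≤ Fintype.card (ι → κ → K) * (Nat.card K ^ s * Nat.card V ^ Fintype.card ι) := by
        rw [Finset.sum_const, smul_eq_mul]
        gcongr
        exact Finset.card_filter_le _ _
    _ = _ := by
        rw [Fintype.card_fun, Fintype.card_fun, ← Nat.card_eq_fintype_card]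
        ring

end Chains

theorem lt_add_two_mul_log_of_mul_pow_le {p D n : ℕ} {c : ℝ} (hp : 2 ≤ p) (hc : 0 < c)
    (hc1 : c ≤ 1) (h : c * p ^ D ≤ p ^ n) : (D : ℝ) < n + 2 * Real.log (10 * c⁻¹) := by
  have hp' : (2 : ℝ) ≤ p := by exact_mod_cast hp
  have hL : 1 / 2 < Real.log p :=
    (show (1 / 2 : ℝ) < Real.log 2 by linarith [Real.log_two_gt_d9]).trans_le
      (Real.log_le_log (by norm_num) hp')
  have hb : 0 ≤ Real.log c⁻¹ := Real.log_nonneg ((one_le_inv₀ hc).mpr hc1)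
  have hB : Real.log c⁻¹ < Real.log (10 * c⁻¹) :=
    Real.log_lt_log (by positivity) (by linarith [inv_pos.mpr hc])
  have hlog : ((D : ℝ) - n) * Real.log p ≤ Real.log c⁻¹ := by
    have := Real.log_le_log (by positivity) h
    rw [Real.log_mul hc.ne' (by positivity), Real.log_pow, Real.log_pow] at this
    rw [Real.log_inv]
    linarith
  nlinarith

theorem natCast_lt_five_mul_of_density_bounds {p D m N S : ℕ} {c : ℝ} (hp : 2 ≤ p) (hc : 0 < c)
    (hN : 0 < N) (hcS : c * N ≤ S) (hSN : S ≤ N) (hS : S * p ^ D ≤ p ^ (5 * m) * N) :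
    (D : ℝ) < 5 * (m + Real.log (10 * c⁻¹) + 1) := by
  have hN' : (0 : ℝ) < N := by exact_mod_cast hN
  have hc1 : c ≤ 1 := le_of_mul_le_mul_right (by linarith [(Nat.cast_le (α := ℝ)).mpr hSN]) hN'
  have hcp : c * p ^ D ≤ p ^ (5 * m) := by
    refine le_of_mul_le_mul_right ?_ hN'
    calc c * p ^ D * N = c * N * p ^ D := by ring
      _ ≤ S * p ^ D := by gcongr
      _ ≤ p ^ (5 * m) * N := by exact_mod_cast hS
  have hB : 0 ≤ Real.log (10 * c⁻¹) :=
    Real.log_nonneg (by nlinarith [(one_le_inv₀ hc).mpr hc1])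
  have := lt_add_two_mul_log_of_mul_pow_le hp hc hc1 hcp
  push_cast at this
  linarith

/-- **Transitivity of respectedness via chains.** If the bilinear map `β` has high rank on
`V × V` and `x, x+a, y, y+a ∈ X` admit at least `c'|V|^k` chains `(z₁,…,z_k)` of respected
quadruples linking `(x+a,x)` to `(y+a,y)`, then, provided `R ≥ K(kr + log(10c'⁻¹) + 1)`,
the quadruple `(x+a, x, y+a, y)` is itself respected. -/
theorem respected_chains_transitive (p : ℕ) [hp : Fact p.Prime] :
    ∃ K : ℝ, 0 < K ∧
      ∀ (G H : Type) [AddCommGroup G] [Module (ZMod p) G] [Fintype G]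
        [AddCommGroup H] [Module (ZMod p) H] [Module.Finite (ZMod p) H]
        (V : Submodule (ZMod p) G) (t : G) (r : ℕ)
        (β : G →ₗ[ZMod p] G →ₗ[ZMod p] (Fin r → ZMod p)) (R : ℝ),
        (∀ lam : Fin r → ZMod p, lam ≠ 0 →
          ∀ m : ℕ, HasBilinRankDecomp
            (fun u v : V => ∑ i, lam i * β (u : G) (v : G) i) m → R ≤ (m : ℝ)) →
        ∀ (X : Set G), (∀ x ∈ X, x - t ∈ V) →
        ∀ (φ : (x : G) → (↥(V ⊓ LinearMap.ker (β x)) →ₗ[ZMod p] H))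
          (x y a : G), x ∈ X → x + a ∈ X → y ∈ X → y + a ∈ X →
        ∀ (k : ℕ) (hk : 0 < k) (c' : ℝ), 0 < c' →
        c' * (Nat.card ↥V : ℝ) ^ k ≤
          (({ z : Fin k → G |
              (∀ i, z i ∈ X ∧ z i + a ∈ X) ∧
              SubspaceRespected (fun w => V ⊓ LinearMap.ker (β w)) φ
                (x + a) x (z ⟨0, hk⟩ + a) (z ⟨0, hk⟩) ∧
              (∀ (i : ℕ) (h₁ : i < k) (h₂ : i + 1 < k),
                SubspaceRespected (fun w => V ⊓ LinearMap.ker (β w)) φ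
                  (z ⟨i, h₁⟩ + a) (z ⟨i, h₁⟩) (z ⟨i + 1, h₂⟩ + a) (z ⟨i + 1, h₂⟩)) ∧
              SubspaceRespected (fun w => V ⊓ LinearMap.ker (β w)) φ
                (y + a) y (z ⟨k - 1, Nat.sub_lt hk Nat.one_pos⟩ + a)
                (z ⟨k - 1, Nat.sub_lt hk Nat.one_pos⟩) } :
            Set (Fin k → G)).ncard : ℝ) →
        K * ((k : ℝ) * r + Real.log (10 * c'⁻¹) + 1) ≤ R →
        SubspaceRespected (fun w => V ⊓ LinearMap.ker (β w)) φ (x + a) x (y + a) y := by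
  refine ⟨5, by norm_num, ?_⟩
  intro G H _ _ _ _ _ _ V t r β R hrank X hX φ x y a _ _ _ _ k hk c' hc' hcount hR
  by_contra hne
  obtain ⟨w, hw⟩ := DFunLike.ne_iff.mp
    ((subspaceRespected_iff_quadDefect_eq_zero _ φ _ _ _ _).not.mp hne)
  obtain ⟨χ, hχ⟩ := Module.Projective.exists_dual_ne_zero (ZMod p) hw
  have hZ := ncard_setOf_iInf_ker_le_mul_pow_le β V _ t (ι := Fin k) (D := ⌈R⌉₊) (s := 4 * r)
    (ξ := χ ∘ₗ quadDefect _ φ (x + a) x (y + a) y) (DFunLike.ne_iff.mpr ⟨w, hχ⟩)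
    fun μ hμ => Nat.ceil_le.mpr <| le_finrank_map_scalarFormOn_add β μ
      (inf_le_left.trans (inf_le_left.trans (inf_le_left.trans inf_le_left)))
      (by simpa using V.finrank_le_finrank_inf_ker_four_add β (x + a) x (y + a) y) (hrank μ hμ)
  rw [Fintype.card_fin, Fintype.card_fin, Nat.card_zmod] at hZ
  rw [← Nat.cast_pow] at hcount
  refine (hR.trans (Nat.le_ceil R)).not_gt ?_
  have := natCast_lt_five_mul_of_density_bounds (m := k * r) hp.out.two_le hc'
    (pow_pos Nat.card_pos k) hcount ?_
    ((Nat.mul_le_mul_right _ (Set.ncard_le_ncard ?_)).trans (hZ.trans ?_))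
  · exact_mod_cast this
  · calc _ ≤ Nat.card V ^ Fintype.card (Fin k) :=
          V.ncard_le_natCard_pow_of_forall_sub_mem fun z hz i => hX _ (hz.1 i).1
      _ = _ := by rw [Fintype.card_fin]
  · rintro z ⟨hzX, h₁, h₂, h₃⟩
    exact ⟨fun i => hX _ (hzX i).1,
      (iInf_ker_le_ker_quadDefect β V φ hk h₁ h₂ h₃).trans (ker_le_ker_comp _ χ)⟩
  · gcongr
    · exact hp.out.one_lt.le
    · nlinarith
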